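/- arXiv:2507.02789 — 3 statements merged into one kernel-verified Lean document; each statement's English description precedes it below -/
import Mathlib

section
/- Let I ⊆ R = ℂ[x_1,…,x_n] be a homogeneous ideal with 𝔪^{k+2} ⊆ I ⊆ 𝔪^k for some k ≥ 1. Then restriction to the degree-k part gives a ℂ-linear bijection between the space of graded R-module homomorphisms φ: I → R/I of degree 1 (i.e. φ(I_j) ⊆ (R/I)_{j+1} for all j) and the space Hom_ℂ(I_k, (R/I)_{k+1}) of arbitrary ℂ-linear maps from I_k to (R/I)_{k+1}. In particular, dim_ℂ Hom_R(I, R/I)_1 = (dim_ℂ I_k)·(dim_ℂ (R/I)_{k+1}). -/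
open MvPolynomial

noncomputable section

/-- The polynomial ring `ℂ[x_1,…,x_n]`. -/
abbrev Rn (n : ℕ) : Type := MvPolynomial (Fin n) ℂ

/-- The irrelevant maximal ideal `𝔪 = (x_1,…,x_n)`. -/
def mIdeal (n : ℕ) : Ideal (Rn n) := Ideal.span (Set.range (X : Fin n → Rn n))

/-- The degree-`j` graded piece of an ideal, as a `ℂ`-subspace of `R`. -/
def gradedPiece (n : ℕ) (I : Ideal (Rn n)) (j : ℕ) : Submodule ℂ (Rn n) :=
  Submodule.restrictScalars ℂ I ⊓ homogeneousSubmodule (Fin n) ℂ j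

/-- The degree-`j` graded piece of the quotient `R/I`: the image of `R_j`. -/
def quotPiece (n : ℕ) (I : Ideal (Rn n)) (j : ℕ) : Submodule ℂ (Rn n ⧸ I) :=
  (homogeneousSubmodule (Fin n) ℂ j).map (Ideal.Quotient.mkₐ ℂ I).toLinearMap

/-- A graded `R`-module homomorphism `I → R/I` of degree `1`. -/
def IsDegOne (n : ℕ) (I : Ideal (Rn n)) (φ : ↥I →ₗ[Rn n] Rn n ⧸ I) : Prop :=
  ∀ (j : ℕ) (f : ↥I), (f : Rn n) ∈ homogeneousSubmodule (Fin n) ℂ j →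
    φ f ∈ quotPiece n I (j + 1)

/-- `Hom_R(I, R/I)_1`, the `ℂ`-vector space of degree-one graded homomorphisms. -/
def degOneHom (n : ℕ) (I : Ideal (Rn n)) : Submodule ℂ (↥I →ₗ[Rn n] Rn n ⧸ I) where
  carrier := {φ | IsDegOne n I φ}
  add_mem' := by
    intro φ ψ hφ hψ j f hf
    simpa using add_mem (hφ j f hf) (hψ j f hf)
  zero_mem' := by
    intro j f hf
    simpa using (quotPiece _ I (j + 1)).zero_mem
  smul_mem' := by
    intro c φ hφ j f hf
    simpa using Submodule.smul_mem _ c (hφ j f hf)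

/-!
The ideal `I` lives in degrees `≥ k`, and a degree-one `φ : I → R/I` kills `I_j` for `j > k`
because `(R/I)_{j+1} = 0` once `𝔪^{k+2} ⊆ I`; hence `φ f = φ (f_k)` and `φ` is determined by its
restriction to `I_k`. Conversely `f ↦ ψ (f_k)` is `R`-linear for every `ℂ`-linear
`ψ : I_k → (R/I)_{k+1}`: for `f ∈ 𝔪^k` the degree-`k` part of `r f` is `r(0) f_k`, and `r` acts on
`(R/I)_{k+1}` through `r(0)` since `𝔪 · (R/I)_{k+1} = 0`.
-/

variable {n : ℕ}

section MaximalIdeal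

lemma homogeneousComponent_eq_zero_of_mem_mIdeal_pow {m j : ℕ} {p : Rn n}
    (hp : p ∈ mIdeal n ^ m) (hj : j < m) : homogeneousComponent j p = 0 :=
  homogeneousComponent_eq_zero' _ _ fun d hd (hdj : d.degree = j) =>
    mem_support_iff.mp hd ((mem_pow_idealOfVars_iff' m p).mp hp d (hdj ▸ hj))

lemma MvPolynomial.IsHomogeneous.mem_mIdeal_pow {m j : ℕ} {p : Rn n} (hp : p.IsHomogeneous j)
    (hj : m ≤ j) : p ∈ mIdeal n ^ m :=
  (mem_pow_idealOfVars_iff' m p).mpr fun _ hd => hp.coeff_eq_zero (by omega)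

lemma sub_C_constantCoeff_mem_mIdeal (r : Rn n) : r - C (constantCoeff r) ∈ mIdeal n := by
  rw [← pow_one (mIdeal n)]
  refine (mem_pow_idealOfVars_iff' 1 _).mpr fun d hd => ?_
  obtain rfl : d = 0 := (Finsupp.degree_eq_zero_iff d).mp (Nat.lt_one_iff.mp hd)
  simp [constantCoeff_eq]

lemma homogeneousComponent_mul_of_mem_mIdeal_pow {k : ℕ} (r : Rn n) {f : Rn n}
    (hf : f ∈ mIdeal n ^ k) :
    homogeneousComponent k (r * f) = constantCoeff r • homogeneousComponent k f := by
  have hrest : (r - C (constantCoeff r)) * f ∈ mIdeal n ^ (k + 1) := by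
    rw [pow_succ']
    exact Ideal.mul_mem_mul (sub_C_constantCoeff_mem_mIdeal r) hf
  calc homogeneousComponent k (r * f)
      = homogeneousComponent k (C (constantCoeff r) * f) +
          homogeneousComponent k ((r - C (constantCoeff r)) * f) := by
        rw [← map_add]; ring_nf
    _ = constantCoeff r • homogeneousComponent k f := by
        rw [homogeneousComponent_C_mul, homogeneousComponent_eq_zero_of_mem_mIdeal_pow hrest
          k.lt_succ_self, add_zero, smul_eq_C_mul]

end MaximalIdeal

section Quotient

variable {I : Ideal (Rn n)}

instance (j : ℕ) : FiniteDimensional ℂ (homogeneousSubmodule (Fin n) ℂ j) :=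
  Module.Finite.iff_fg.mpr (homogeneousSubmodule_fg _ _ j)

instance (j : ℕ) : FiniteDimensional ℂ (gradedPiece n I j) :=
  Submodule.finiteDimensional_of_le inf_le_right

instance (j : ℕ) : FiniteDimensional ℂ (quotPiece n I j) :=
  Module.Finite.map _ _

lemma quotPiece_eq_bot {m j : ℕ} (hI : mIdeal n ^ m ≤ I) (hj : m ≤ j) :
    quotPiece n I j = ⊥ := by
  rw [eq_bot_iff]
  rintro _ ⟨g, hg, rfl⟩
  exact (Submodule.mem_bot ℂ).mpr
    (Ideal.Quotient.eq_zero_iff_mem.mpr (hI (hg.mem_mIdeal_pow hj)))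

lemma smul_eq_constantCoeff_smul_of_mem_quotPiece {j : ℕ} (hI : mIdeal n ^ (j + 1) ≤ I)
    (r : Rn n) {y : Rn n ⧸ I} (hy : y ∈ quotPiece n I j) :
    r • y = constantCoeff r • y := by
  obtain ⟨g, hg, rfl⟩ := hy
  have hmem : (r - C (constantCoeff r)) * g ∈ I := by
    refine hI ?_
    rw [pow_succ']
    exact Ideal.mul_mem_mul (sub_C_constantCoeff_mem_mIdeal r) (hg.mem_mIdeal_pow le_rfl)
  rw [← sub_eq_zero, ← algebraMap_smul (Rn n) (constantCoeff r), ← sub_smul]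
  exact Ideal.Quotient.eq_zero_iff_mem.mpr (by simpa using hmem)

end Quotient

section Restriction

variable {I : Ideal (Rn n)} {k : ℕ}

variable (I k) in
def gradedPieceToIdeal : gradedPiece n I k →ₗ[ℂ] I where
  toFun v := ⟨v, (Submodule.mem_inf.mp v.2).1⟩
  map_add' _ _ := rfl
  map_smul' _ _ := rfl

variable (I k) in
def degOneRestrict :
    degOneHom n I →ₗ[ℂ] gradedPiece n I k →ₗ[ℂ] quotPiece n I (k + 1) where
  toFun φ := LinearMap.codRestrict _ ((φ.1.restrictScalars ℂ) ∘ₗ gradedPieceToIdeal I k)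
    fun v => φ.2 k _ (Submodule.mem_inf.mp v.2).2
  map_add' _ _ := rfl
  map_smul' _ _ := rfl

variable (hhom : ∀ f ∈ I, ∀ j : ℕ, homogeneousComponent j f ∈ I)
  (h1 : mIdeal n ^ (k + 2) ≤ I) (h2 : I ≤ mIdeal n ^ k)

include h1 h2 in
lemma IsDegOne.apply_eq_zero_of_isHomogeneous {φ : I →ₗ[Rn n] Rn n ⧸ I}
    (hφ : IsDegOne n I φ) {f : I} {j : ℕ} (hf : (f : Rn n).IsHomogeneous j) (hj : j ≠ k) :
    φ f = 0 := by
  rcases hj.lt_or_gt with hlt | hgt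
  · have hf0 : f = 0 := Subtype.ext <| by
      rw [← homogeneousComponent_eq_self hf]
      exact homogeneousComponent_eq_zero_of_mem_mIdeal_pow (h2 f.2) hlt
    rw [hf0, map_zero]
  · simpa [quotPiece_eq_bot h1 (by omega : k + 2 ≤ j + 1)] using hφ j f hf

include h1 h2 in
lemma IsDegOne.apply_eq_apply_homogeneousComponent {φ : I →ₗ[Rn n] Rn n ⧸ I}
    (hφ : IsDegOne n I φ) (f : I) : φ f = φ ⟨homogeneousComponent k f, hhom f f.2 k⟩ := by
  let F : ℕ → I := fun j => ⟨homogeneousComponent j f, hhom f f.2 j⟩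
  calc φ f = ∑ j ∈ Finset.range ((f : Rn n).totalDegree + 1), φ (F j) := by
        rw [← map_sum]
        congr 1
        exact Subtype.ext (by simp [F, sum_homogeneousComponent])
    _ = φ (F k) := by
        refine Finset.sum_eq_single k (fun j _ hj => ?_) fun hk_mem => ?_
        · exact hφ.apply_eq_zero_of_isHomogeneous h1 h2
            (homogeneousComponent_isHomogeneous j _) hj
        · have hFk : F k = 0 := Subtype.ext <|
            homogeneousComponent_eq_zero _ _ (by simpa using hk_mem)
          rw [hFk, map_zero]

variable (k) in
def gradedPieceProj : I →ₗ[ℂ] gradedPiece n I k where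
  toFun f := ⟨homogeneousComponent k f, hhom f f.2 k, homogeneousComponent_mem k _⟩
  map_add' _ _ := Subtype.ext (map_add _ _ _)
  map_smul' _ _ := Subtype.ext (map_smul _ _ _)

@[simp]
lemma coe_gradedPieceProj_apply (f : I) :
    (gradedPieceProj k hhom f : Rn n) = homogeneousComponent k (f : Rn n) :=
  rfl

lemma gradedPieceProj_gradedPieceToIdeal (v : gradedPiece n I k) :
    gradedPieceProj k hhom (gradedPieceToIdeal I k v) = v :=
  Subtype.ext (homogeneousComponent_eq_self (Submodule.mem_inf.mp v.2).2)

include hhom h1 h2 in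
lemma degOneRestrict_injective : Function.Injective (degOneRestrict I k) := by
  intro φ ψ h
  ext f
  rw [φ.2.apply_eq_apply_homogeneousComponent hhom h1 h2,
    ψ.2.apply_eq_apply_homogeneousComponent hhom h1 h2]
  exact congr(($h (gradedPieceProj k hhom f) : Rn n ⧸ I))

def extendOfGradedPiece (ψ : gradedPiece n I k →ₗ[ℂ] quotPiece n I (k + 1)) :
    I →ₗ[Rn n] Rn n ⧸ I where
  toFun f := ψ (gradedPieceProj k hhom f)
  map_add' f g := by simp only [map_add, Submodule.coe_add]
  map_smul' r f := by
    have hsmul : gradedPieceProj k hhom (r • f) = constantCoeff r • gradedPieceProj k hhom f :=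
      Subtype.ext (homogeneousComponent_mul_of_mem_mIdeal_pow r (h2 f.2))
    rw [hsmul, map_smul, Submodule.coe_smul, RingHom.id_apply,
      smul_eq_constantCoeff_smul_of_mem_quotPiece h1 r (ψ _).2]

lemma isDegOne_extendOfGradedPiece (ψ : gradedPiece n I k →ₗ[ℂ] quotPiece n I (k + 1)) :
    IsDegOne n I (extendOfGradedPiece hhom h1 h2 ψ) := by
  intro j f hf
  obtain rfl | hjk := eq_or_ne j k
  · exact (ψ _).2
  · have h0 : gradedPieceProj k hhom f = 0 :=
      Subtype.ext (by simp [homogeneousComponent_of_mem hf, hjk.symm])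
    change (ψ (gradedPieceProj k hhom f) : Rn n ⧸ I) ∈ _
    rw [h0, map_zero]
    exact zero_mem _

include hhom h1 h2 in
lemma degOneRestrict_surjective : Function.Surjective (degOneRestrict I k) := fun ψ =>
  ⟨⟨_, isDegOne_extendOfGradedPiece hhom h1 h2 ψ⟩, LinearMap.ext fun v =>
    congrArg ψ (gradedPieceProj_gradedPieceToIdeal hhom v)⟩

end Restriction

theorem stmt4_general (n k : ℕ) (I : Ideal (Rn n))
    (hhom : ∀ f ∈ I, ∀ j : ℕ, homogeneousComponent j f ∈ I)
    (h1 : mIdeal n ^ (k + 2) ≤ I) (h2 : I ≤ mIdeal n ^ k) :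
    (∀ ψ : ↥(gradedPiece n I k) →ₗ[ℂ] Rn n ⧸ I,
        (∀ v, ψ v ∈ quotPiece n I (k + 1)) →
        ∃! φ : ↥I →ₗ[Rn n] Rn n ⧸ I, IsDegOne n I φ ∧
          ∀ v : ↥(gradedPiece n I k),
            φ ⟨(v : Rn n), (Submodule.mem_inf.mp v.2).1⟩ = ψ v) ∧
    Module.finrank ℂ ↥(degOneHom n I) =
      Module.finrank ℂ ↥(gradedPiece n I k) *
        Module.finrank ℂ ↥(quotPiece n I (k + 1)) := by
  have hbij : Function.Bijective (degOneRestrict I k) :=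
    ⟨degOneRestrict_injective hhom h1 h2, degOneRestrict_surjective hhom h1 h2⟩
  refine ⟨fun ψ hψ => ?_, ?_⟩
  · obtain ⟨φ, hφ⟩ := hbij.2 (ψ.codRestrict _ hψ)
    refine ⟨φ, ⟨φ.2, fun v => congr(($hφ v : Rn n ⧸ I))⟩, fun φ' hφ' => ?_⟩
    have hrestrict : degOneRestrict I k ⟨φ', hφ'.1⟩ = degOneRestrict I k φ :=
      LinearMap.ext fun v => Subtype.ext ((hφ'.2 v).trans congr(($hφ v : Rn n ⧸ I)).symm)
    exact congrArg Subtype.val (hbij.1 hrestrict)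
  · rw [(LinearEquiv.ofBijective _ hbij).finrank_eq, Module.finrank_linearMap]

/-- Restriction to the degree-`k` part gives a bijection between degree-one graded
`R`-module homomorphisms `I → R/I` and arbitrary `ℂ`-linear maps `I_k → (R/I)_{k+1}`;
in particular `dim Hom_R(I,R/I)_1 = dim I_k · dim (R/I)_{k+1}`. -/
theorem stmt4 (n k : ℕ) (hk : 1 ≤ k) (I : Ideal (Rn n))
    (hhom : ∀ f ∈ I, ∀ j : ℕ, homogeneousComponent j f ∈ I)
    (h1 : mIdeal n ^ (k + 2) ≤ I) (h2 : I ≤ mIdeal n ^ k) :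
    (∀ ψ : ↥(gradedPiece n I k) →ₗ[ℂ] Rn n ⧸ I,
        (∀ v, ψ v ∈ quotPiece n I (k + 1)) →
        ∃! φ : ↥I →ₗ[Rn n] Rn n ⧸ I, IsDegOne n I φ ∧
          ∀ v : ↥(gradedPiece n I k),
            φ ⟨(v : Rn n), (Submodule.mem_inf.mp v.2).1⟩ = ψ v) ∧
    Module.finrank ℂ ↥(degOneHom n I) =
      Module.finrank ℂ ↥(gradedPiece n I k) *
        Module.finrank ℂ ↥(quotPiece n I (k + 1)) :=
  stmt4_general n k I hhom h1 h2

end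
end

section
/- Fix an integer k ≥ 1 and define Θ: ℝ² → ℝ by Θ(a,b) = a·C(k+1,2) + (b − 3a)·(C(k+2,2) − a) + (C(k+4,2) − 3b + 3a)·(C(k+3,2) − b) − 3. Then for all (a,b) ∈ ℝ², Θ(a,b) ≥ (k⁴ + 8k³ + 21k² + 20k − 120)/40. In particular, Θ(a,b) > 0 for all (a,b) ∈ ℝ² whenever k ≥ 2. -/
/-
After substituting `C(k+m,2) = (k+m)(k+m-1)/2`, `Θ` is a quadratic form in `(a,b)` plus lower
order terms, and completing the square gives
`Θ(a,b) - (k⁴ + 8k³ + 21k² + 20k - 120)/40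
  = 5/2 (a - b + (2k² + 13k + 20)/10)² + 1/2 (a + b - (k² + 6k + 8)/2)²`.
The bound is attained, and for `k ≥ 2` it is already `≥ 84/40`.
-/

/-- The function `Θ_{3,k,0}` of the paper (three variables, second-syzygy parameter `0`):
`Θ(a,b) = a·C(k+1,2) + (b − 3a)(C(k+2,2) − a) + (C(k+4,2) − 3b + 3a)(C(k+3,2) − b) − 3`. -/
noncomputable def Theta3 (k : ℕ) (a b : ℝ) : ℝ :=
  a * (Nat.choose (k + 1) 2 : ℝ) + (b - 3 * a) * ((Nat.choose (k + 2) 2 : ℝ) - a) +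
    ((Nat.choose (k + 4) 2 : ℝ) - 3 * b + 3 * a) * ((Nat.choose (k + 3) 2 : ℝ) - b) - 3

lemma cast_choose_add_two (k m : ℕ) :
    ((Nat.choose (k + m) 2 : ℕ) : ℝ) = ((k : ℝ) + m) * ((k : ℝ) + m - 1) / 2 := by
  rw [Nat.cast_choose_two]
  push_cast
  ring

lemma Theta3_sub_eq_sum_sq (k : ℕ) (a b : ℝ) :
    Theta3 k a b - ((k : ℝ) ^ 4 + 8 * k ^ 3 + 21 * k ^ 2 + 20 * k - 120) / 40 =
      5 / 2 * (a - b + (2 * (k : ℝ) ^ 2 + 13 * k + 20) / 10) ^ 2 +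
        1 / 2 * (a + b - ((k : ℝ) ^ 2 + 6 * k + 8) / 2) ^ 2 := by
  rw [Theta3, cast_choose_add_two k 1, cast_choose_add_two k 2, cast_choose_add_two k 3,
    cast_choose_add_two k 4]
  push_cast
  ring

lemma le_Theta3 (k : ℕ) (a b : ℝ) :
    ((k : ℝ) ^ 4 + 8 * k ^ 3 + 21 * k ^ 2 + 20 * k - 120) / 40 ≤ Theta3 k a b := by
  have h := Theta3_sub_eq_sum_sq k a b
  have : 0 ≤ 5 / 2 * (a - b + (2 * (k : ℝ) ^ 2 + 13 * k + 20) / 10) ^ 2 +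
      1 / 2 * (a + b - ((k : ℝ) ^ 2 + 6 * k + 8) / 2) ^ 2 := by positivity
  linarith

lemma quartic_pos_of_two_le {k : ℕ} (hk : 2 ≤ k) :
    0 < ((k : ℝ) ^ 4 + 8 * k ^ 3 + 21 * k ^ 2 + 20 * k - 120) / 40 := by
  have hk' : (2 : ℝ) ≤ k := by exact_mod_cast hk
  have h2 : (4 : ℝ) ≤ (k : ℝ) ^ 2 := by nlinarith
  have h3 : (8 : ℝ) ≤ (k : ℝ) ^ 3 := by nlinarith
  have h4 : (16 : ℝ) ≤ (k : ℝ) ^ 4 := by nlinarith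
  linarith

theorem stmt11_general (k : ℕ) :
    (∀ a b : ℝ, ((k : ℝ) ^ 4 + 8 * (k : ℝ) ^ 3 + 21 * (k : ℝ) ^ 2 + 20 * (k : ℝ) - 120) / 40 ≤
      Theta3 k a b) ∧
    (2 ≤ k → ∀ a b : ℝ, 0 < Theta3 k a b) :=
  ⟨le_Theta3 k, fun hk a b => (quartic_pos_of_two_le hk).trans_le (le_Theta3 k a b)⟩

/-- `Θ_{3,k,0}(a,b) ≥ (k⁴ + 8k³ + 21k² + 20k − 120)/40` for all `(a,b) ∈ ℝ²`;
in particular `Θ_{3,k,0} > 0` everywhere when `k ≥ 2`. -/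
theorem stmt11 (k : ℕ) (hk : 1 ≤ k) :
    (∀ a b : ℝ, ((k : ℝ) ^ 4 + 8 * (k : ℝ) ^ 3 + 21 * (k : ℝ) ^ 2 + 20 * (k : ℝ) - 120) / 40 ≤
      Theta3 k a b) ∧
    (2 ≤ k → ∀ a b : ℝ, 0 < Theta3 k a b) :=
  stmt11_general k
end

section
/- Let I ⊆ R = ℂ[x_1,…,x_n] be a homogeneous ideal with 𝔪^{k+2} ⊆ I ⊆ 𝔪^k for some k ≥ 1. Let g_1, …, g_h be a ℂ-basis of I_k, let f_1, …, f_h ∈ R_{k+1} be arbitrary homogeneous polynomials of degree k+1, and let t ∈ ℂ. Define the ideal J = (g_1 + t·f_1, …, g_h + t·f_h) + I', where I' is the ideal generated by I_{k+1} together with 𝔪^{k+2}. Then the ideal of initial forms of J equals I, i.e. In(J) = I; in particular dim_ℂ(R/J) = dim_ℂ(R/I). -/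
/-!
Let `L` be a linear map sending `g i` to `t • f i`, and `N = π_{k+1} ∘ L ∘ π_k`, where `π_j` is
the projection onto degree `j`. Then `N² = 0`, so `ψ = 1 + N` is a linear automorphism of `R`, and
it is the identity on `𝔪^{k+1}`. The image `ψ(I)` is an ideal: writing `r = r₀ + r'` with `r'` in
`𝔪`, one has `r ψ(p) = ψ(r₀ p + r' p + r' N p)`, because `r' p` and `r' N p` lie in `𝔪^{k+1}`.
Since `ψ(g i) = g i + t f i` and `I ∩ 𝔪^{k+1} = I'`, this gives `ψ(I) = J`, and hence
`R/I ≅ R/J` as vector spaces. Moreover, `ψ` alters a polynomial only in degree `k + 1`, and only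
when its degree-`k` part is nonzero, so it preserves the initial forms of elements of the
homogeneous ideal `I`. This gives `In(J) = I`.
-/

open MvPolynomial

noncomputable section

/-- The ideal of initial forms `In(J)` of an ideal `J`: it is generated by the lowest-degree
nonzero homogeneous components of the elements of `J`. -/
def initialIdeal (n : ℕ) (J : Ideal (Rn n)) : Ideal (Rn n) :=
  Ideal.span {g | ∃ f ∈ J, ∃ m : ℕ, g = homogeneousComponent m f ∧ g ≠ 0 ∧
    ∀ m' < m, homogeneousComponent m' f = 0}


theorem LinearIndependent.exists_linearMap_apply_eq {K V W ι : Type*} [Field K]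
    [AddCommGroup V] [Module K V] [AddCommGroup W] [Module K W] {v : ι → V}
    (hv : LinearIndependent K v) (w : ι → W) : ∃ L : V →ₗ[K] W, ∀ i, L (v i) = w i := by
  obtain ⟨L, hL⟩ := LinearMap.exists_extend ((Module.Basis.span hv).constr K w)
  refine ⟨L, fun i => ?_⟩
  have := congr($hL (Module.Basis.span hv i))
  rwa [LinearMap.comp_apply, Module.Basis.constr_basis, Submodule.subtype_apply,
    Module.Basis.span_apply] at this

theorem Ideal.span_subset_of_mul_mem {K A : Type*} [CommSemiring K] [CommSemiring A]
    [Algebra K A] {S : Set A} {T : Submodule K A} (hS : S ⊆ T)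
    (hT : ∀ r : A, ∀ x ∈ T, r * x ∈ T) : (Ideal.span S : Set A) ⊆ T :=
  let P : Ideal A :=
    { carrier := T, add_mem' := T.add_mem, zero_mem' := T.zero_mem, smul_mem' := hT }
  Ideal.span_le (I := P) |>.mpr hS

theorem Module.finrank_quotient_eq_of_map_eq {K A : Type*} [Field K] [CommRing A] [Algebra K A]
    (e : A ≃ₗ[K] A) {I J : Ideal A}
    (h : (I.restrictScalars K).map (e : A →ₗ[K] A) = J.restrictScalars K) :
    Module.finrank K (A ⧸ I) = Module.finrank K (A ⧸ J) :=
  ((Submodule.Quotient.restrictScalarsEquiv K I).symm ≪≫ₗ Submodule.Quotient.equiv _ _ e h ≪≫ₗ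
    Submodule.Quotient.restrictScalarsEquiv K J).finrank_eq

def unipotentEquiv {R M : Type*} [Ring R] [AddCommGroup M] [Module R M] (N : Module.End R M)
    (hN : N * N = 0) : M ≃ₗ[R] M :=
  LinearEquiv.ofLinearMap (1 + N) (1 - N)
    (by rw [← Module.End.mul_eq_comp, ← (Commute.one_left N).mul_self_sub_mul_self_eq, hN,
      mul_one, sub_zero]; rfl)
    (by rw [← Module.End.mul_eq_comp, ← (Commute.one_left N).mul_self_sub_mul_self_eq', hN,
      mul_one, sub_zero]; rfl)

namespace MvPolynomial

variable {σ R : Type*}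

section CommSemiring

variable [CommSemiring R]

theorem mem_pow_idealOfVars_iff_homogeneousComponent {m : ℕ} {p : MvPolynomial σ R} :
    p ∈ idealOfVars σ R ^ m ↔ ∀ j < m, homogeneousComponent j p = 0 := by
  rw [mem_pow_idealOfVars_iff']
  refine ⟨fun h j hj => ?_, fun h d hd => ?_⟩
  · ext d
    rw [coeff_homogeneousComponent, coeff_zero]
    split_ifs with hdj
    · exact h d (hdj ▸ hj)
    · rfl
  · simpa [coeff_homogeneousComponent] using congr(coeff d $(h _ hd))

theorem mem_pow_idealOfVars_of_mem_homogeneousSubmodule {m d : ℕ} {p : MvPolynomial σ R}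
    (hp : p ∈ homogeneousSubmodule σ R d) (hmd : m ≤ d) : p ∈ idealOfVars σ R ^ m :=
  mem_pow_idealOfVars_iff_homogeneousComponent.mpr fun j hj => by
    rw [homogeneousComponent_of_mem hp, if_neg (by omega)]

end CommSemiring

section CommRing

variable [CommRing R]

theorem sub_homogeneousComponent_mem_pow_idealOfVars {m : ℕ} {p : MvPolynomial σ R}
    (hp : p ∈ idealOfVars σ R ^ m) : p - homogeneousComponent m p ∈ idealOfVars σ R ^ (m + 1) := by
  rw [mem_pow_idealOfVars_iff_homogeneousComponent] at hp ⊢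
  intro j hj
  rw [map_sub, homogeneousComponent_of_mem (homogeneousComponent_mem m p)]
  rcases Nat.lt_succ_iff_lt_or_eq.mp hj with hj | rfl
  · rw [hp j hj, if_neg hj.ne, sub_zero]
  · rw [if_pos rfl, sub_self]

def raiseDegree (k : ℕ) (L : Module.End R (MvPolynomial σ R)) : Module.End R (MvPolynomial σ R) :=
  homogeneousComponent (k + 1) ∘ₗ L ∘ₗ homogeneousComponent k

theorem raiseDegree_mem_homogeneousSubmodule (k : ℕ) (L : Module.End R (MvPolynomial σ R))
    (p : MvPolynomial σ R) : raiseDegree k L p ∈ homogeneousSubmodule σ R (k + 1) :=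
  homogeneousComponent_mem _ _

theorem raiseDegree_eq_zero {k : ℕ} (L : Module.End R (MvPolynomial σ R)) {p : MvPolynomial σ R}
    (hp : homogeneousComponent k p = 0) : raiseDegree k L p = 0 := by
  simp [raiseDegree, hp]

theorem raiseDegree_mul_self (k : ℕ) (L : Module.End R (MvPolynomial σ R)) :
    raiseDegree k L * raiseDegree k L = 0 := by
  refine LinearMap.ext fun p => ?_
  rw [Module.End.mul_apply, LinearMap.zero_apply]
  refine raiseDegree_eq_zero L ?_
  rw [homogeneousComponent_of_mem (raiseDegree_mem_homogeneousSubmodule k L p), if_neg (by omega)]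

def shear (k : ℕ) (L : Module.End R (MvPolynomial σ R)) : MvPolynomial σ R ≃ₗ[R] MvPolynomial σ R :=
  unipotentEquiv (raiseDegree k L) (raiseDegree_mul_self k L)

theorem shear_apply (k : ℕ) (L : Module.End R (MvPolynomial σ R)) (p : MvPolynomial σ R) :
    shear k L p = p + raiseDegree k L p := rfl

theorem shear_apply_of_mem_pow_idealOfVars {k : ℕ} (L : Module.End R (MvPolynomial σ R))
    {p : MvPolynomial σ R} (hp : p ∈ idealOfVars σ R ^ (k + 1)) : shear k L p = p := by
  rw [shear_apply, raiseDegree_eq_zero L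
    (mem_pow_idealOfVars_iff_homogeneousComponent.mp hp k k.lt_succ_self), add_zero]

theorem homogeneousComponent_shear_of_le {k d j : ℕ} (L : Module.End R (MvPolynomial σ R))
    {p : MvPolynomial σ R} (hp : p ∈ homogeneousSubmodule σ R d) (hjd : j ≤ d) :
    homogeneousComponent j (shear k L p) = homogeneousComponent j p := by
  rw [shear_apply, map_add, add_eq_left,
    homogeneousComponent_of_mem (raiseDegree_mem_homogeneousSubmodule k L p)]
  split_ifs with hj
  · rw [raiseDegree_eq_zero L (by rw [homogeneousComponent_of_mem hp, if_neg (by omega)])]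
  · rfl

end CommRing

end MvPolynomial

section

variable {n k : ℕ} {I : Ideal (Rn n)}

theorem span_gradedPiece_sup_mIdeal_pow_eq (hhom : ∀ f ∈ I, ∀ j : ℕ, homogeneousComponent j f ∈ I)
    (h1 : mIdeal n ^ (k + 2) ≤ I) :
    Ideal.span (gradedPiece n I (k + 1) : Set (Rn n)) ⊔ mIdeal n ^ (k + 2) =
      I ⊓ mIdeal n ^ (k + 1) := by
  refine le_antisymm (sup_le ?_ (le_inf h1 (Ideal.pow_le_pow_right (k + 1).le_succ)))
    fun p hp => ?_
  · rw [Ideal.span_le]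
    rintro x ⟨hxI, hxd⟩
    exact ⟨hxI, mem_pow_idealOfVars_of_mem_homogeneousSubmodule hxd le_rfl⟩
  · rw [← sub_add_cancel p (homogeneousComponent (k + 1) p)]
    exact add_mem (Ideal.mem_sup_right (sub_homogeneousComponent_mem_pow_idealOfVars hp.2))
      (Ideal.mem_sup_left (Ideal.subset_span ⟨hhom p hp.1 _, homogeneousComponent_mem _ _⟩))

theorem mul_shear_mem_map (L : Module.End ℂ (Rn n)) (h1 : mIdeal n ^ (k + 2) ≤ I)
    (h2 : I ≤ mIdeal n ^ k) (r : Rn n) {p : Rn n} (hp : p ∈ I) :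
    r * shear k L p ∈ (I.restrictScalars ℂ).map (shear k L : Rn n →ₗ[ℂ] Rn n) := by
  set r' := r - homogeneousComponent 0 r
  have hr' : r' ∈ mIdeal n ^ 1 :=
    sub_homogeneousComponent_mem_pow_idealOfVars (by simp : r ∈ idealOfVars (Fin n) ℂ ^ 0)
  have hr'p : r' * p ∈ mIdeal n ^ (k + 1) := by
    rw [add_comm, pow_add]; exact Ideal.mul_mem_mul hr' (h2 hp)
  have hr'N : r' * raiseDegree k L p ∈ mIdeal n ^ (k + 2) := by
    rw [show k + 2 = 1 + (k + 1) by omega, pow_add]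
    exact Ideal.mul_mem_mul hr'
      (mem_pow_idealOfVars_of_mem_homogeneousSubmodule (raiseDegree_mem_homogeneousSubmodule k L p)
        le_rfl)
  have hfixed : r' * p + r' * raiseDegree k L p ∈ mIdeal n ^ (k + 1) :=
    add_mem hr'p (Ideal.pow_le_pow_right (k + 1).le_succ hr'N)
  refine ⟨coeff 0 r • p + (r' * p + r' * raiseDegree k L p),
    add_mem (Submodule.smul_mem _ _ hp) (add_mem (I.mul_mem_left _ hp) (h1 hr'N)), ?_⟩
  rw [LinearEquiv.coe_coe, map_add, map_smul, shear_apply_of_mem_pow_idealOfVars L hfixed,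
    shear_apply, smul_eq_C_mul, ← homogeneousComponent_zero]
  ring

theorem map_shear_eq {ι : Type*} (L : Module.End ℂ (Rn n))
    (hhom : ∀ f ∈ I, ∀ j : ℕ, homogeneousComponent j f ∈ I)
    (h1 : mIdeal n ^ (k + 2) ≤ I) (h2 : I ≤ mIdeal n ^ k) (g : ι → Rn n)
    (hg : Submodule.span ℂ (Set.range g) = gradedPiece n I k) :
    (I.restrictScalars ℂ).map (shear k L : Rn n →ₗ[ℂ] Rn n) =
      (Ideal.span (Set.range (shear k L ∘ g)) ⊔ I ⊓ mIdeal n ^ (k + 1)).restrictScalars ℂ := by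
  apply le_antisymm
  · rintro _ ⟨p, hp, rfl⟩
    have hk : homogeneousComponent k p ∈ Submodule.span ℂ (Set.range g) :=
      hg ▸ ⟨hhom p hp k, homogeneousComponent_mem k p⟩
    have hrest : p - homogeneousComponent k p ∈ I ⊓ mIdeal n ^ (k + 1) :=
      ⟨sub_mem hp (hhom p hp k), sub_homogeneousComponent_mem_pow_idealOfVars (h2 hp)⟩
    have hshear_k := Submodule.mem_map_of_mem (f := (shear k L : Rn n →ₗ[ℂ] Rn n)) hk
    rw [Submodule.map_span, ← Set.range_comp] at hshear_k
    rw [Submodule.restrictScalars_mem, LinearEquiv.coe_coe,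
      ← add_sub_cancel (homogeneousComponent k p) p, map_add,
      shear_apply_of_mem_pow_idealOfVars L hrest.2]
    exact add_mem (Ideal.mem_sup_left (Submodule.span_le_restrictScalars ℂ (Rn n) _ hshear_k))
      (Ideal.mem_sup_right hrest)
  · intro x hx
    obtain ⟨y, hy, z, hz, rfl⟩ := Submodule.mem_sup.mp hx
    refine add_mem (Ideal.span_subset_of_mul_mem ?_ ?_ hy)
      ⟨z, hz.1, shear_apply_of_mem_pow_idealOfVars L hz.2⟩
    · rintro _ ⟨i, rfl⟩
      exact ⟨g i, (hg.le (Submodule.subset_span ⟨i, rfl⟩)).1, rfl⟩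
    · rintro r _ ⟨p, hp, rfl⟩
      exact mul_shear_mem_map L h1 h2 r hp

theorem homogeneousComponent_shear_mem (L : Module.End ℂ (Rn n))
    (hhom : ∀ f ∈ I, ∀ j : ℕ, homogeneousComponent j f ∈ I) {q : Rn n} (hq : q ∈ I) {m : ℕ}
    (hlow : ∀ j < m, homogeneousComponent j (shear k L q) = 0) :
    homogeneousComponent m (shear k L q) ∈ I := by
  have hN := fun j => homogeneousComponent_of_mem (m := j)
    (raiseDegree_mem_homogeneousSubmodule k L q)
  rw [shear_apply, map_add, hN]
  split_ifs with hm
  · have hqk := hlow k (by omega)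
    rw [shear_apply, map_add, hN, if_neg (by omega), add_zero] at hqk
    rw [raiseDegree_eq_zero L hqk, add_zero]
    exact hhom q hq _
  · rw [add_zero]
    exact hhom q hq m

theorem mem_initialIdeal_of_homogeneousComponent_eq {J : Ideal (Rn n)} {p x : Rn n} {d : ℕ}
    (hp : p ∈ J) (hlow : ∀ j < d, homogeneousComponent j p = 0)
    (hd : homogeneousComponent d p = x) :
    x ∈ initialIdeal n J := by
  by_cases hx0 : x = 0
  · rw [hx0]
    exact zero_mem _
  · exact Ideal.subset_span ⟨p, hp, d, hd.symm, hx0, hlow⟩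

theorem initialIdeal_eq_of_map_shear (L : Module.End ℂ (Rn n))
    (hhom : ∀ f ∈ I, ∀ j : ℕ, homogeneousComponent j f ∈ I) {J : Ideal (Rn n)}
    (hJ : (I.restrictScalars ℂ).map (shear k L : Rn n →ₗ[ℂ] Rn n) = J.restrictScalars ℂ) :
    initialIdeal n J = I := by
  have mem_J : ∀ q ∈ I, shear k L q ∈ J := fun q hq =>
    (Submodule.restrictScalars_mem ℂ J _).mp (hJ ▸ Submodule.mem_map_of_mem hq)
  refine le_antisymm (Ideal.span_le.mpr ?_) fun p hp => ?_
  · rintro _ ⟨_, hpJ, m, rfl, -, hlow⟩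
    obtain ⟨q, hq, rfl⟩ := (hJ ▸ (Submodule.restrictScalars_mem ℂ J _).mpr hpJ :)
    exact homogeneousComponent_shear_mem L hhom hq hlow
  · rw [← sum_homogeneousComponent p]
    refine Ideal.sum_mem _ fun d _ => ?_
    have hd := homogeneousComponent_mem d p
    refine mem_initialIdeal_of_homogeneousComponent_eq (d := d) (mem_J _ (hhom p hp d))
      (fun j hj => ?_) ?_
    · rw [homogeneousComponent_shear_of_le L hd hj.le, homogeneousComponent_of_mem hd,
        if_neg hj.ne]
    · rw [homogeneousComponent_shear_of_le L hd le_rfl, homogeneousComponent_of_mem hd,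
        if_pos rfl]

end

theorem stmt16_general (n k h : ℕ) (I : Ideal (Rn n))
    (hhom : ∀ f ∈ I, ∀ j : ℕ, homogeneousComponent j f ∈ I)
    (h1 : mIdeal n ^ (k + 2) ≤ I) (h2 : I ≤ mIdeal n ^ k)
    (g : Fin h → Rn n)
    (hgli : LinearIndependent ℂ g)
    (hgspan : Submodule.span ℂ (Set.range g) = gradedPiece n I k)
    (f : Fin h → Rn n) (hf : ∀ i, f i ∈ homogeneousSubmodule (Fin n) ℂ (k + 1))
    (t : ℂ)
    (I' : Ideal (Rn n))
    (hI' : I' = Ideal.span ((gradedPiece n I (k + 1) : Set (Rn n))) ⊔ mIdeal n ^ (k + 2))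
    (J : Ideal (Rn n))
    (hJ : J = Ideal.span (Set.range fun i => g i + t • f i) ⊔ I') :
    initialIdeal n J = I ∧
    Module.finrank ℂ (Rn n ⧸ J) = Module.finrank ℂ (Rn n ⧸ I) := by
  obtain ⟨L, hL⟩ := hgli.exists_linearMap_apply_eq (t • f)
  have hshear : shear k L ∘ g = fun i => g i + t • f i := by
    funext i
    have hgk := (hgspan.le (Submodule.subset_span ⟨i, rfl⟩)).2
    rw [Function.comp_apply, shear_apply, raiseDegree, LinearMap.comp_apply,
      LinearMap.comp_apply, homogeneousComponent_of_mem hgk, if_pos rfl, hL, Pi.smul_apply,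
      homogeneousComponent_of_mem (Submodule.smul_mem _ t (hf i)), if_pos rfl]
  have hmap : (I.restrictScalars ℂ).map (shear k L : Rn n →ₗ[ℂ] Rn n) = J.restrictScalars ℂ := by
    rw [map_shear_eq L hhom h1 h2 g hgspan, hJ, hI', span_gradedPiece_sup_mIdeal_pow_eq hhom h1,
      hshear]
  exact ⟨initialIdeal_eq_of_map_shear L hhom hmap,
    (Module.finrank_quotient_eq_of_map_eq _ hmap).symm⟩

/-- Unobstructedness of degree-one tangent vectors at a 2-step ideal: perturbing a basis of
`I_k` by multiples of degree-`(k+1)` forms and adding `I' = (I_{k+1}) + 𝔪^(k+2)` yields an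
ideal `J` with `In(J) = I`, hence `dim_ℂ(R/J) = dim_ℂ(R/I)`. -/
theorem stmt16 (n k h : ℕ) (hk : 1 ≤ k) (I : Ideal (Rn n))
    (hhom : ∀ f ∈ I, ∀ j : ℕ, homogeneousComponent j f ∈ I)
    (h1 : mIdeal n ^ (k + 2) ≤ I) (h2 : I ≤ mIdeal n ^ k)
    (g : Fin h → Rn n) (hg : ∀ i, g i ∈ gradedPiece n I k)
    (hgli : LinearIndependent ℂ g)
    (hgspan : Submodule.span ℂ (Set.range g) = gradedPiece n I k)
    (f : Fin h → Rn n) (hf : ∀ i, f i ∈ homogeneousSubmodule (Fin n) ℂ (k + 1))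
    (t : ℂ)
    (I' : Ideal (Rn n))
    (hI' : I' = Ideal.span ((gradedPiece n I (k + 1) : Set (Rn n))) ⊔ mIdeal n ^ (k + 2))
    (J : Ideal (Rn n))
    (hJ : J = Ideal.span (Set.range fun i => g i + t • f i) ⊔ I') :
    initialIdeal n J = I ∧
    Module.finrank ℂ (Rn n ⧸ J) = Module.finrank ℂ (Rn n ⧸ I) :=
  stmt16_general n k h I hhom h1 h2 g hgli hgspan f hf t I' hI' J hJ
end
end
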